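/- Let L_tr, L_1, …, L_n, L_ref : ℝ^M → ℝ with L_tr, L_1, …, L_n twice continuously differentiable and L_ref differentiable, and let θ* : ℝ^n → ℝ^M be a differentiable map satisfying ∇L_tr(θ*(β)) + Σ_{i=1}^n β_i ∇L_i(θ*(β)) = 0 for all β in a neighborhood of 0 ∈ ℝ^n. Define Q(β) := L_ref(θ*(β)). If the Hessian ∇²L_tr(θ*(0)) is invertible, then for each j ∈ {1, …, n}, ∂Q/∂β_j evaluated at β = (0, …, 0) equals − (∇L_ref(θ*(0)))ᵀ · (∇²L_tr(θ*(0)))^{-1} · ∇L_j(θ*(0)). -/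

import Mathlib

/-!
Differentiate the stationarity identity `∇L_tr(θ*(β)) + ∑ i, β i • ∇L_i(θ*(β)) = 0` at `β = 0`.
Since the weights vanish there, the `i`-th term contributes only `dβ_i • ∇L_i(θ*(0))`, so
`H (Dθ*(0) e_j) + ∇L_j(θ*(0)) = 0`, i.e. `Dθ*(0) e_j = -H⁻¹ ∇L_j(θ*(0))`. The chain rule for
`Q = L_ref ∘ θ*` then gives `∂Q/∂β_j (0) = ⟪∇L_ref(θ*(0)), Dθ*(0) e_j⟫`.
-/

open scoped RealInnerProductSpace Topology

theorem ContDiff.contDiff_gradient {F : Type*} [NormedAddCommGroup F] [InnerProductSpace ℝ F]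
    [CompleteSpace F] {f : F → ℝ} {m n : WithTop ℕ∞} (hf : ContDiff ℝ n f) (hmn : m + 1 ≤ n) :
    ContDiff ℝ m (gradient f) :=
  (InnerProductSpace.toDual ℝ F).symm.toContinuousLinearEquiv.contDiff.comp (hf.fderiv_right hmn)

section WeightedStationarity

variable {ι E F : Type*} [Fintype ι] [NormedAddCommGroup E] [NormedSpace ℝ E]
  [NormedAddCommGroup F] [NormedSpace ℝ F]
  {g₀ : E → F} {g : ι → E → F} {θ : (ι → ℝ) → E} {A : E →L[ℝ] F} {D : (ι → ℝ) →L[ℝ] E}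

theorem hasFDerivAt_add_sum_smul_comp_zero (hg₀ : HasFDerivAt g₀ A (θ 0))
    (hg : ∀ i, DifferentiableAt ℝ (g i) (θ 0)) (hθ : HasFDerivAt θ D 0) :
    HasFDerivAt (fun β => g₀ (θ β) + ∑ i, β i • g i (θ β))
      (A.comp D + ∑ i, (ContinuousLinearMap.proj i).smulRight (g i (θ 0))) 0 := by
  refine (hg₀.comp 0 hθ).add (HasFDerivAt.fun_sum fun i _ => ?_)
  have hterm := (ContinuousLinearMap.proj (R := ℝ) (φ := fun _ : ι => ℝ) i).hasFDerivAt.smul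
    ((hg i).hasFDerivAt.comp 0 hθ)
  exact hterm.congr_fderiv (by simp)

theorem apply_fderiv_single_eq_neg_of_eventually_eq_zero [DecidableEq ι]
    (hg₀ : HasFDerivAt g₀ A (θ 0)) (hg : ∀ i, DifferentiableAt ℝ (g i) (θ 0))
    (hθ : HasFDerivAt θ D 0)
    (hzero : ∀ᶠ β in 𝓝 0, g₀ (θ β) + ∑ i, β i • g i (θ β) = 0) (j : ι) :
    A (D (Pi.single j 1)) = - g j (θ 0) := by
  have hderiv_zero : A.comp D + ∑ i, (ContinuousLinearMap.proj i).smulRight (g i (θ 0)) = 0 :=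
    (hasFDerivAt_add_sum_smul_comp_zero hg₀ hg hθ).unique
      ((hasFDerivAt_const 0 0).congr_of_eventuallyEq hzero)
  have hj := congrArg (fun T : (ι → ℝ) →L[ℝ] F => T (Pi.single j 1)) hderiv_zero
  simp only [add_apply, sum_apply, zero_apply, ContinuousLinearMap.comp_apply,
    ContinuousLinearMap.smulRight_apply, ContinuousLinearMap.proj_apply, Pi.single_apply,
    ite_smul, one_smul, zero_smul, Finset.sum_ite_eq', Finset.mem_univ, if_true] at hj
  exact eq_neg_of_add_eq_zero_left hj

end WeightedStationarity

/-- **Influence function formula (Eq. (5) of IDEAL).** With `Q(β) = L_ref(θ*(β))`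
and stationarity `∇L_tr(θ*(β)) + ∑ i, β i • ∇L_i(θ*(β)) = 0` near `β = 0`, if the
Hessian `∇²L_tr(θ*(0))` is invertible then
`∂Q/∂β_j (0) = - ⟪∇L_ref(θ*(0)), (∇²L_tr(θ*(0)))⁻¹ ∇L_j(θ*(0))⟫`. -/
theorem ideal_influence_formula {M n : ℕ}
    (Ltr Lref : EuclideanSpace ℝ (Fin M) → ℝ)
    (L : Fin n → EuclideanSpace ℝ (Fin M) → ℝ)
    (θstar : (Fin n → ℝ) → EuclideanSpace ℝ (Fin M))
    (hLtr : ContDiff ℝ 2 Ltr) (hL : ∀ i, ContDiff ℝ 2 (L i))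
    (hLref : Differentiable ℝ Lref)
    (hθ : Differentiable ℝ θstar)
    (U : Set (Fin n → ℝ)) (hU : U ∈ nhds (0 : Fin n → ℝ))
    (hstat : ∀ β ∈ U,
      gradient Ltr (θstar β) + ∑ i, β i • gradient (L i) (θstar β) = 0)
    (H : EuclideanSpace ℝ (Fin M) ≃L[ℝ] EuclideanSpace ℝ (Fin M))
    (hH : (H : EuclideanSpace ℝ (Fin M) →L[ℝ] EuclideanSpace ℝ (Fin M)) =
      fderiv ℝ (gradient Ltr) (θstar 0))
    (j : Fin n) :
    fderiv ℝ (fun β => Lref (θstar β)) 0 (Pi.single j 1) =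
      - ⟪gradient Lref (θstar 0), H.symm (gradient (L j) (θstar 0))⟫ := by
  have hgrad_diff {f : EuclideanSpace ℝ (Fin M) → ℝ} (hf : ContDiff ℝ 2 f) :
      Differentiable ℝ (gradient f) :=
    (hf.contDiff_gradient (m := 1) le_rfl).differentiable one_ne_zero
  have hHessian : HasFDerivAt (gradient Ltr) (H : _ →L[ℝ] _) (θstar 0) :=
    hH ▸ (hgrad_diff hLtr _).hasFDerivAt
  have hH_dθ := apply_fderiv_single_eq_neg_of_eventually_eq_zero hHessian
    (fun i => hgrad_diff (hL i) _) (hθ 0).hasFDerivAt (Filter.mem_of_superset hU hstat) j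
  have hdθ : fderiv ℝ θstar 0 (Pi.single j 1) = - H.symm (gradient (L j) (θstar 0)) := by
    rw [← map_neg, ← hH_dθ]
    exact (H.symm_apply_apply _).symm
  rw [fderiv_fun_comp 0 (hLref _) (hθ 0), ContinuousLinearMap.comp_apply, hdθ,
    ← inner_gradient_left, inner_neg_right]
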